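/- arXiv:2503.13512 — 3 statements merged into one kernel-verified Lean document; each statement's English description precedes it below -/
import Mathlib

section
/- Let s : ℝ² → ℝ be continuous, positively homogeneous, centrally symmetric, and piecewise linear with finitely many pieces (i.e., there is a finite set of lines through the origin such that s is linear on each closed sector they determine). Then there exist finitely many linear forms L₁, …, L_k on ℝ² and real coefficients c₁, …, c_k such that s(x) = Σᵢ₌₁ᵏ cᵢ·|Lᵢ(x)| for all x. -/
/-!
The lines `ker (g i - g j)` cut the plane into open sectors, and on each sector `s` is linear:
a sector is connected, and on it two distinct pieces `g i ≠ g j` never take the same value, so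
`s` cannot pass from one piece to another. We then remove the lines one at a time. Across a
line `ker h` the two linear pieces of `s` agree on the line, so they differ by a multiple `μ • h`,
and `s - (μ / 2) * |h|` is linear on the union of the two sectors adjacent to the ray through
`x₀ ∈ ker h`; by central symmetry the same holds at `-x₀`. When no line is left, `s` is linear
and even, hence zero.
-/

open Set Filter Topology Module

section FinrankTwo

variable {K V : Type*} [Field K] [AddCommGroup V] [Module K V]

theorem exists_ne_zero_apply_eq_zero (hV : 1 < finrank K V) (h : V →ₗ[K] K) :
    ∃ x₀ : V, x₀ ≠ 0 ∧ h x₀ = 0 := by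
  have : FiniteDimensional K V := Module.finite_of_finrank_pos (by omega)
  have hker := LinearMap.ker_ne_bot_of_finrank_lt (f := h) (by rwa [finrank_self])
  obtain ⟨x₀, hx₀, hne⟩ := Submodule.exists_mem_ne_zero_of_ne_bot hker
  exact ⟨x₀, hne, hx₀⟩

theorem exists_eq_smul_of_apply_eq_zero (hV : finrank K V = 2) {h : V →ₗ[K] K} (hh : h ≠ 0)
    {x₀ y : V} (hx₀ : x₀ ≠ 0) (hhx₀ : h x₀ = 0) (hy : h y = 0) : ∃ a : K, y = a • x₀ := by
  have : FiniteDimensional K V := Module.finite_of_finrank_eq_succ hV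
  have hrank : finrank K (LinearMap.ker h) = 1 := by
    have := Module.Dual.finrank_ker_add_one_of_ne_zero hh
    omega
  obtain ⟨a, ha⟩ := (finrank_eq_one_iff_of_nonzero' (⟨x₀, hhx₀⟩ : LinearMap.ker h)
    (by simpa [Subtype.ext_iff] using hx₀)).1 hrank ⟨y, hy⟩
  exact ⟨a, by simpa using (congrArg Subtype.val ha).symm⟩

theorem exists_form_eq_smul_of_apply_eq_zero (hV : finrank K V = 2) {h φ : V →ₗ[K] K}
    (hh : h ≠ 0) {x₀ : V} (hx₀ : x₀ ≠ 0) (hhx₀ : h x₀ = 0) (hφ : φ x₀ = 0) :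
    ∃ μ : K, φ = μ • h := by
  have hle : ⨅ _ : Unit, LinearMap.ker h ≤ LinearMap.ker φ := fun y hy => by
    obtain ⟨a, rfl⟩ := exists_eq_smul_of_apply_eq_zero hV hh hx₀ hhx₀ (by simpa using hy)
    simp [hφ]
  obtain ⟨μ, hμ⟩ := Submodule.mem_span_singleton.1
    (by simpa using mem_span_of_iInf_ker_le_ker hle)
  exact ⟨μ, hμ.symm⟩

end FinrankTwo

section SignCell

variable {V : Type*} [AddCommGroup V] [Module ℝ V]

/-- The open sector of the arrangement of lines `ker φ`, `φ ∈ S`, that contains `x`;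
it is empty when `x` lies on one of the lines. -/
def signCell (S : Finset (V →ₗ[ℝ] ℝ)) (x : V) : Set V :=
  {y | ∀ φ ∈ S, 0 < φ x * φ y}

def LinearOnSignCells (S : Finset (V →ₗ[ℝ] ℝ)) (s : V → ℝ) : Prop :=
  ∀ x, ∃ g : V →ₗ[ℝ] ℝ, EqOn s g (signCell S x)

variable {S : Finset (V →ₗ[ℝ] ℝ)} {x y : V}

@[simp]
theorem signCell_empty (x : V) : signCell ∅ x = univ := by
  simp [signCell]

theorem signCell_insert [DecidableEq (V →ₗ[ℝ] ℝ)] (h : V →ₗ[ℝ] ℝ) (S : Finset (V →ₗ[ℝ] ℝ))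
    (x : V) : signCell (insert h S) x = signCell S x ∩ {y | 0 < h x * h y} := by
  ext y
  simp [signCell, and_comm]

theorem mem_signCell_self_of_mem (hy : y ∈ signCell S x) : x ∈ signCell S x :=
  fun φ hφ => mul_self_pos.2 (left_ne_zero_of_mul (hy φ hφ).ne')

theorem signCell_eq_of_mem (hy : y ∈ signCell S x) : signCell S y = signCell S x := by
  ext z
  refine forall₂_congr fun φ hφ => ?_
  have hxy := hy φ hφ
  constructor <;> intro hz <;> nlinarith [mul_pos hxy hz, sq_nonneg (φ x), sq_nonneg (φ y)]

theorem neg_mem_signCell_neg : -y ∈ signCell S (-x) ↔ y ∈ signCell S x := by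
  simp [signCell]

theorem mem_signCell_of_smul_mem {a : ℝ} (ha : 0 ≤ a) (hy : a • y ∈ signCell S x) :
    y ∈ signCell S x := fun φ hφ => by
  have := hy φ hφ
  rw [map_smul, smul_eq_mul, mul_left_comm] at this
  exact pos_of_mul_pos_right this ha

theorem convex_signCell (S : Finset (V →ₗ[ℝ] ℝ)) (x : V) : Convex ℝ (signCell S x) := by
  intro y hy z hz a b ha hb hab φ hφ
  have hy' := hy φ hφ
  have hz' := hz φ hφ
  simp only [map_add, map_smul, smul_eq_mul]
  rcases ha.eq_or_lt with rfl | ha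
  · simp_all
  · nlinarith [mul_pos ha hy']

theorem linearOnSignCells_insert_neg [DecidableEq (V →ₗ[ℝ] ℝ)] {s : V → ℝ} {h : V →ₗ[ℝ] ℝ} :
    LinearOnSignCells (insert (-h) S) s ↔ LinearOnSignCells (insert h S) s := by
  simp only [LinearOnSignCells, signCell_insert, LinearMap.neg_apply, neg_mul_neg]

def IsSumAbsForms (s : V → ℝ) : Prop :=
  ∃ (k : ℕ) (L : Fin k → V →ₗ[ℝ] ℝ) (c : Fin k → ℝ), ∀ x, s x = ∑ i, c i * |L i x|

theorem IsSumAbsForms.of_sub_abs {s : V → ℝ} {c : ℝ} {h : V →ₗ[ℝ] ℝ}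
    (hs : IsSumAbsForms fun x => s x - c * |h x|) : IsSumAbsForms s := by
  obtain ⟨k, L, a, hL⟩ := hs
  exact ⟨k + 1, Fin.cons h L, Fin.cons c a, fun x => by simp [Fin.sum_univ_succ, ← hL x]⟩

theorem eq_zero_of_linearOnSignCells_empty {s : V → ℝ} (hS : LinearOnSignCells ∅ s)
    (hsym : ∀ x, s x = s (-x)) : s = 0 := by
  obtain ⟨g, hg⟩ := hS 0
  ext x
  have hx := hsym x
  rw [hg (by simp), hg (by simp), map_neg] at hx
  rw [Pi.zero_apply, hg (by simp)]
  linarith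

section DifferenceForms

variable [DecidableEq (V →ₗ[ℝ] ℝ)] {ι : Type*} [Fintype ι] {g : ι → V →ₗ[ℝ] ℝ}

def differenceForms (g : ι → V →ₗ[ℝ] ℝ) : Finset (V →ₗ[ℝ] ℝ) :=
  (Finset.univ.image fun p : ι × ι => g p.1 - g p.2).erase 0

theorem sub_mem_differenceForms {i j : ι} (hij : g i ≠ g j) :
    g i - g j ∈ differenceForms g :=
  Finset.mem_erase.2 ⟨sub_ne_zero.2 hij, Finset.mem_image.2 ⟨(i, j), Finset.mem_univ _, rfl⟩⟩

theorem ne_zero_of_mem_differenceForms {φ : V →ₗ[ℝ] ℝ} (hφ : φ ∈ differenceForms g) : φ ≠ 0 :=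
  (Finset.mem_erase.1 hφ).1

theorem eq_of_apply_eq_of_mem_signCell {x y : V} (hy : y ∈ signCell (differenceForms g) x)
    {i j : ι} (hij : g i y = g j y) : g i = g j := by
  by_contra hne
  simpa [hij] using hy _ (sub_mem_differenceForms hne)

end DifferenceForms

variable [TopologicalSpace V] [IsTopologicalAddGroup V] [ContinuousSMul ℝ V]

theorem mem_closure_inter_pos {U : Set V} (hU : IsOpen U) {h : V →ₗ[ℝ] ℝ} (hh : h ≠ 0)
    (hy : y ∈ U) (hhy : 0 ≤ h y) : y ∈ closure (U ∩ {z | 0 < h z}) := by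
  obtain ⟨v, hv⟩ := LinearMap.surjective hh 1
  have hlim : Tendsto (fun t : ℝ => y + t • v) (𝓝[>] 0) (𝓝 y) := by
    have : Continuous fun t : ℝ => y + t • v := by fun_prop
    simpa using (this.tendsto 0).mono_left nhdsWithin_le_nhds
  refine mem_closure_of_tendsto hlim ?_
  filter_upwards [hlim.eventually (hU.mem_nhds hy), self_mem_nhdsWithin] with t htU ht
  exact ⟨htU, by simpa [hv] using add_pos_of_nonneg_of_pos hhy ht⟩

variable [T2Space V] [FiniteDimensional ℝ V]

theorem isOpen_signCell (S : Finset (V →ₗ[ℝ] ℝ)) (x : V) : IsOpen (signCell S x) := by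
  have : signCell S x = ⋂ φ ∈ S, {y | 0 < φ x * φ y} := by
    ext
    simp [signCell]
  rw [this]
  exact isOpen_biInter_finset fun φ _ =>
    isOpen_lt continuous_const (continuous_const.mul φ.continuous_of_finiteDimensional)

theorem mul_pos_of_mem_signCell {h : V →ₗ[ℝ] ℝ} (hker : ∀ z ∈ signCell S x, h z ≠ 0)
    (hy : y ∈ signCell S x) : 0 < h x * h y := by
  have hx := mem_signCell_self_of_mem hy
  have hC := (convex_signCell S x).isPreconnected
  have hcont : ContinuousOn h (signCell S x) := h.continuous_of_finiteDimensional.continuousOn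
  by_contra! hxy
  obtain ⟨z, hz, hz0⟩ : ∃ z ∈ signCell S x, h z = 0 := by
    rcases (hker x hx).lt_or_gt with hhx | hhx
    · exact hC.intermediate_value₂ hx hy hcont continuousOn_const hhx.le (by nlinarith)
    · exact hC.intermediate_value₂ hy hx hcont continuousOn_const (by nlinarith) hhx.le
  exact hker z hz hz0

variable [DecidableEq (V →ₗ[ℝ] ℝ)] {s : V → ℝ} {h : V →ₗ[ℝ] ℝ}

theorem linearOnSignCells_of_iUnion_eq_univ {ι : Type*} [Fintype ι] {A : ι → Set V}
    {g : ι → V →ₗ[ℝ] ℝ} (hs : Continuous s) (hA : ∀ i, IsClosed (A i))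
    (hcover : ⋃ i, A i = univ) (hsA : ∀ i, ∀ x ∈ A i, s x = g i x) :
    LinearOnSignCells (differenceForms g) s := by
  intro x
  set C := signCell (differenceForms g) x
  rcases C.eq_empty_or_nonempty with hC | ⟨y, hy⟩
  · exact ⟨0, by simp [hC]⟩
  have hx := mem_signCell_self_of_mem hy
  obtain ⟨i₀, hi₀⟩ := mem_iUnion.1 (hcover ▸ mem_univ x)
  set Z := {y | s y = g i₀ y}
  set F := ⋃ j, ⋃ (_ : g j ≠ g i₀), A j
  have hZ : IsClosed Z := isClosed_eq hs (g i₀).continuous_of_finiteDimensional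
  have hF : IsClosed F :=
    isClosed_iUnion_of_finite fun j => isClosed_iUnion_of_finite fun _ => hA j
  have hCZF : C ⊆ Z ∪ F := fun y _ => by
    obtain ⟨j, hj⟩ := mem_iUnion.1 (hcover ▸ mem_univ y)
    by_cases hji : g j = g i₀
    · exact Or.inl (by simp [Z, hsA j y hj, ← hji])
    · exact Or.inr (mem_iUnion₂.2 ⟨j, hji, hj⟩)
  have hnotF : ∀ y ∈ C, y ∈ Z → y ∉ F := fun y hy hyZ hyF => by
    obtain ⟨j, hj, hyj⟩ := by simpa [F] using hyF
    exact hj (eq_of_apply_eq_of_mem_signCell hy ((hsA j y hyj).symm.trans hyZ))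
  have hdisj : C ∩ (Z ∩ F) = ∅ :=
    eq_empty_iff_forall_notMem.2 fun y ⟨hy, hyZ, hyF⟩ => hnotF y hy hyZ hyF
  refine ⟨g i₀, ?_⟩
  exact ((isPreconnected_iff_subset_of_disjoint_closed.1 (convex_signCell _ x).isPreconnected)
    Z F hZ hF hCZF hdisj).resolve_right fun hCF => hnotF x hx (hsA i₀ x hi₀) (hCF hx)

theorem LinearOnSignCells.exists_eqOn_inter_nonneg (hS : LinearOnSignCells (insert h S) s)
    (hs : Continuous s) (hh : h ≠ 0) (x : V) :
    ∃ g : V →ₗ[ℝ] ℝ, EqOn s g (signCell S x ∩ {y | 0 ≤ h y}) := by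
  set T := signCell S x ∩ {y | 0 < h y}
  have hsub : signCell S x ∩ {y | 0 ≤ h y} ⊆ closure T :=
    fun y hy => mem_closure_inter_pos (isOpen_signCell S x) hh hy.1 hy.2
  rcases T.eq_empty_or_nonempty with hT | ⟨p, hpx, hp⟩
  · exact ⟨0, fun y hy => by simpa [hT] using hsub hy⟩
  obtain ⟨g, hg⟩ := hS p
  have hgT : EqOn s g T := fun y hy => hg <| by
    rw [signCell_insert, signCell_eq_of_mem hpx]
    exact ⟨hy.1, show 0 < h p * h y from mul_pos hp hy.2⟩
  exact ⟨g, fun y hy =>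
    (isClosed_eq hs g.continuous_of_finiteDimensional).closure_subset_iff.2 hgT (hsub hy)⟩

theorem LinearOnSignCells.exists_eqOn_sub_abs (hV : finrank ℝ V = 2)
    (hS : LinearOnSignCells (insert h S) s) (hs : Continuous s) (hh : h ≠ 0) {x₀ : V}
    (hx₀ : x₀ ≠ 0) (hhx₀ : h x₀ = 0) :
    ∃ (c : ℝ) (g : V →ₗ[ℝ] ℝ), EqOn (fun y => s y - c * |h y|) g (signCell S x₀) := by
  rcases (signCell S x₀).eq_empty_or_nonempty with hC | ⟨y, hy⟩
  · exact ⟨0, 0, by simp [hC]⟩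
  have hx₀C := mem_signCell_self_of_mem hy
  obtain ⟨gp, hgp⟩ := hS.exists_eqOn_inter_nonneg hs hh x₀
  obtain ⟨gm, hgm⟩ :=
    (linearOnSignCells_insert_neg.2 hS).exists_eqOn_inter_nonneg hs (neg_ne_zero.2 hh) x₀
  have hjump : (gp - gm) x₀ = 0 := by
    rw [LinearMap.sub_apply, ← hgp ⟨hx₀C, hhx₀.ge⟩, ← hgm ⟨hx₀C, by simp [hhx₀]⟩, sub_self]
  obtain ⟨μ, hμ⟩ := exists_form_eq_smul_of_apply_eq_zero hV hh hx₀ hhx₀ hjump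
  refine ⟨μ / 2, gp - (μ / 2) • h, fun y hy => ?_⟩
  have hμy : gp y - gm y = μ * h y := by simpa using LinearMap.congr_fun hμ y
  rcases le_total 0 (h y) with hhy | hhy
  · simp [hgp ⟨hy, hhy⟩, abs_of_nonneg hhy]
  · simp only [hgm ⟨hy, by simpa using hhy⟩, abs_of_nonpos hhy, LinearMap.sub_apply,
      LinearMap.smul_apply, smul_eq_mul]
    linarith

theorem LinearOnSignCells.sub_abs (hV : finrank ℝ V = 2)
    (hS : LinearOnSignCells (insert h S) s) (hsym : ∀ x, s x = s (-x)) (hh : h ≠ 0) {x₀ : V}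
    (hx₀ : x₀ ≠ 0) (hhx₀ : h x₀ = 0) {c : ℝ} {g : V →ₗ[ℝ] ℝ}
    (hg : EqOn (fun y => s y - c * |h y|) g (signCell S x₀)) :
    LinearOnSignCells S (fun y => s y - c * |h y|) := by
  intro x
  -- A cell meeting `ker h` is the cell of `x₀` or of `-x₀`; every other cell lies on one side
  -- of `ker h`, where `|h| = ± h`.
  by_cases hker : ∃ y ∈ signCell S x, h y = 0
  · obtain ⟨y, hy, hhy⟩ := hker
    obtain ⟨a, rfl⟩ := exists_eq_smul_of_apply_eq_zero hV hh hx₀ hhx₀ hhy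
    rcases le_or_gt 0 a with ha | ha
    · exact ⟨g, signCell_eq_of_mem (mem_signCell_of_smul_mem ha hy) ▸ hg⟩
    · have hneg : -x₀ ∈ signCell S x :=
        mem_signCell_of_smul_mem (neg_nonneg.2 ha.le) (by rwa [neg_smul, smul_neg, neg_neg])
      refine ⟨-g, signCell_eq_of_mem hneg ▸ fun z hz => ?_⟩
      have hz' : -z ∈ signCell S x₀ := by simpa using neg_mem_signCell_neg.2 hz
      simpa [hsym z] using hg hz'
  · push Not at hker
    obtain ⟨g, hg⟩ := hS x
    have hgx : EqOn s g (signCell S x) := fun y hy => hg <| by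
      rw [signCell_insert]
      exact ⟨hy, mul_pos_of_mem_signCell hker hy⟩
    by_cases hhx : 0 < h x
    · refine ⟨g - c • h, fun y hy => ?_⟩
      have hhy : 0 < h y := pos_of_mul_pos_right (mul_pos_of_mem_signCell hker hy) hhx.le
      simp [hgx hy, abs_of_pos hhy]
    · refine ⟨g + c • h, fun y hy => ?_⟩
      have hhy : h y < 0 := by nlinarith [mul_pos_of_mem_signCell hker hy]
      simp [hgx hy, abs_of_neg hhy]

theorem LinearOnSignCells.isSumAbsForms (hV : finrank ℝ V = 2) (hS0 : ∀ φ ∈ S, φ ≠ 0)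
    (hs : Continuous s) (hsym : ∀ x, s x = s (-x)) (hS : LinearOnSignCells S s) :
    IsSumAbsForms s := by
  induction S using Finset.induction_on generalizing s with
  | empty =>
    exact ⟨0, Fin.elim0, Fin.elim0, by simp [eq_zero_of_linearOnSignCells_empty hS hsym]⟩
  | insert h S _ ih =>
    have hh := hS0 h (Finset.mem_insert_self h S)
    obtain ⟨x₀, hx₀, hhx₀⟩ := exists_ne_zero_apply_eq_zero (by omega) h
    obtain ⟨c, g, hg⟩ := hS.exists_eqOn_sub_abs hV hs hh hx₀ hhx₀
    refine IsSumAbsForms.of_sub_abs (ih (fun φ hφ => hS0 φ (Finset.mem_insert_of_mem hφ)) ?_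
      (fun x => by simp [hsym x]) (hS.sub_abs hV hsym hh hx₀ hhx₀ hg))
    exact hs.sub (continuous_const.mul (continuous_abs.comp h.continuous_of_finiteDimensional))

end SignCell

theorem stmt11_general (s : EuclideanSpace ℝ (Fin 2) → ℝ)
    (hcont : Continuous s)
    (hsym : ∀ x, s x = s (-x))
    (hpl : ∃ (n : ℕ) (A : Fin n → Set (EuclideanSpace ℝ (Fin 2)))
        (g : Fin n → (EuclideanSpace ℝ (Fin 2) →ₗ[ℝ] ℝ)),
      (∀ i, Convex ℝ (A i)) ∧ (∀ i, IsClosed (A i)) ∧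
      (⋃ i, A i) = Set.univ ∧ ∀ i, ∀ x ∈ A i, s x = g i x) :
    ∃ (k : ℕ) (L : Fin k → (EuclideanSpace ℝ (Fin 2) →ₗ[ℝ] ℝ)) (c : Fin k → ℝ),
      ∀ x, s x = ∑ i, c i * |L i x| := by
  classical
  obtain ⟨n, A, g, -, hA, hcover, hsA⟩ := hpl
  exact (linearOnSignCells_of_iUnion_eq_univ hcont hA hcover hsA).isSumAbsForms
    finrank_euclideanSpace_fin (fun _ => ne_zero_of_mem_differenceForms) hcont hsym

theorem stmt11 (s : EuclideanSpace ℝ (Fin 2) → ℝ)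
    (hcont : Continuous s)
    (hhom : ∀ (l : ℝ) (x), 0 ≤ l → s (l • x) = l * s x)
    (hsym : ∀ x, s x = s (-x))
    (hpl : ∃ (n : ℕ) (A : Fin n → Set (EuclideanSpace ℝ (Fin 2)))
        (g : Fin n → (EuclideanSpace ℝ (Fin 2) →ₗ[ℝ] ℝ)),
      (∀ i, Convex ℝ (A i)) ∧ (∀ i, IsClosed (A i)) ∧
      (⋃ i, A i) = Set.univ ∧ ∀ i, ∀ x ∈ A i, s x = g i x) :
    ∃ (k : ℕ) (L : Fin k → (EuclideanSpace ℝ (Fin 2) →ₗ[ℝ] ℝ)) (c : Fin k → ℝ),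
      ∀ x, s x = ∑ i, c i * |L i x| :=
  stmt11_general s hcont hsym hpl
end

section
/- Let C ⊆ ℝ² be an open cone that is the positivity set of h(x) = ⟪e, x⟫ + Σᵢ εᵢ|⟪wᵢ, x⟫| with εᵢ ∈ {1,-1}. Define R = {p ∈ C : −p ∉ C} and G = {p : p ∈ frontier C ∧ −p ∈ frontier C}. Then the linear span of G is disjoint from the convex hull of R. -/
/-! The absolute values in `h` are even, so the odd part of `h` is linear:
`h x - h (-x) = 2 ⟪e, x⟫`. A frontier point of `{h > 0}` has `h = 0`, so every `p ∈ G`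
satisfies `⟪e, p⟫ = 0`, while `p ∈ R` has `h p > 0 ≥ h (-p)`, hence `⟪e, p⟫ > 0`.
Thus `span G` lies in the hyperplane `⟪e, ·⟫ = 0` and `convexHull R` in the open
half-space `⟪e, ·⟫ > 0`. -/

section OddPart

variable {E : Type*} [AddCommGroup E] [Module ℝ E] {h : E → ℝ} {φ : E →ₗ[ℝ] ℝ}

theorem span_frontier_pos_neg_le_ker [TopologicalSpace E] (hc : Continuous h)
    (hodd : ∀ x, h x - h (-x) = 2 * φ x) :
    Submodule.span ℝ {p | p ∈ frontier {x | 0 < h x} ∧ -p ∈ frontier {x | 0 < h x}} ≤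
      LinearMap.ker φ := by
  rw [Submodule.span_le]
  rintro p ⟨hp, hnp⟩
  have hp0 : 0 = h p := frontier_lt_subset_eq continuous_const hc hp
  have hnp0 : 0 = h (-p) := frontier_lt_subset_eq continuous_const hc hnp
  have := hodd p
  simp only [SetLike.mem_coe, LinearMap.mem_ker]
  linarith

theorem convexHull_pos_not_neg_subset (hodd : ∀ x, h x - h (-x) = 2 * φ x) :
    convexHull ℝ {p | p ∈ {x | 0 < h x} ∧ -p ∉ {x | 0 < h x}} ⊆ {x | 0 < φ x} := by
  refine convexHull_min ?_ (convex_halfSpace_gt φ.isLinear 0)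
  rintro p ⟨hp, hnp⟩
  have := hodd p
  simp only [Set.mem_ofPred_eq, not_lt] at hp hnp ⊢
  linarith

end OddPart

section Hinge

variable {E ι : Type*} [NormedAddCommGroup E] [InnerProductSpace ℝ E] [Fintype ι]

def hinge (e : E) (w : ι → E) (ε : ι → ℝ) (x : E) : ℝ :=
  inner ℝ e x + ∑ i, ε i * |inner ℝ (w i) x|

theorem continuous_hinge (e : E) (w : ι → E) (ε : ι → ℝ) : Continuous (hinge e w ε) :=
  (continuous_const.inner continuous_id).add <| continuous_finsetSum _ fun _ _ =>
    continuous_const.mul (continuous_const.inner continuous_id).abs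

theorem hinge_sub_hinge_neg (e : E) (w : ι → E) (ε : ι → ℝ) (x : E) :
    hinge e w ε x - hinge e w ε (-x) = 2 * innerₛₗ ℝ e x := by
  simp only [hinge, inner_neg_right, abs_neg, innerₛₗ_apply_apply]
  ring

end Hinge

theorem stmt17_general (t : ℕ) (e : EuclideanSpace ℝ (Fin 2))
    (w : Fin t → EuclideanSpace ℝ (Fin 2)) (ε : Fin t → ℝ)
    (h : EuclideanSpace ℝ (Fin 2) → ℝ)
    (hh : ∀ x, h x = (inner ℝ e x : ℝ) + ∑ i, ε i * |(inner ℝ (w i) x : ℝ)|)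
    (C : Set (EuclideanSpace ℝ (Fin 2)))
    (hpos : C = {x | 0 < h x})
    (R G : Set (EuclideanSpace ℝ (Fin 2)))
    (hR : R = {p | p ∈ C ∧ -p ∉ C})
    (hG : G = {p | p ∈ frontier C ∧ -p ∈ frontier C}) :
    Disjoint (Submodule.span ℝ G : Set (EuclideanSpace ℝ (Fin 2)))
      (convexHull ℝ R) := by
  obtain rfl : h = hinge e w ε := funext hh
  subst hpos hR hG
  have hodd := hinge_sub_hinge_neg e w ε
  exact Disjoint.mono (span_frontier_pos_neg_le_ker (continuous_hinge e w ε) hodd)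
    (convexHull_pos_not_neg_subset hodd) (Set.disjoint_left.2 fun _ hx hx' => hx'.ne' hx)

theorem stmt17 (t : ℕ) (e : EuclideanSpace ℝ (Fin 2))
    (w : Fin t → EuclideanSpace ℝ (Fin 2)) (ε : Fin t → ℝ)
    (hε : ∀ i, ε i = 1 ∨ ε i = -1)
    (h : EuclideanSpace ℝ (Fin 2) → ℝ)
    (hh : ∀ x, h x = (inner ℝ e x : ℝ) + ∑ i, ε i * |(inner ℝ (w i) x : ℝ)|)
    (C : Set (EuclideanSpace ℝ (Fin 2)))
    (hcone : ∀ p ∈ C, ∀ l : ℝ, 0 < l → l • p ∈ C)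
    (hopen : IsOpen C)
    (hpos : C = {x | 0 < h x})
    (R G : Set (EuclideanSpace ℝ (Fin 2)))
    (hR : R = {p | p ∈ C ∧ -p ∉ C})
    (hG : G = {p | p ∈ frontier C ∧ -p ∈ frontier C}) :
    Disjoint (Submodule.span ℝ G : Set (EuclideanSpace ℝ (Fin 2)))
      (convexHull ℝ R) :=
  stmt17_general t e w ε h hh C hpos R G hR hG
end

section
/- Let h : ℝᵈ → ℝ, h(x) = L₀(x) + Σᵢ₌₁ᵗ εᵢ·|Lᵢ(x)| with each Lᵢ affine linear and εᵢ ∈ {1,-1}, and let p ∈ ℝᵈ. Then there exist a radius r > 0 and a vector γ ∈ ℝᵈ such that for every q in the open ball B(p, r) at which h is differentiable and such that 2p − q is also a differentiability point of h, one has ∇h(q) + ∇h(2p − q) = γ. -/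
/-!
Near `p`, every hinge `|Lᵢ|` with `Lᵢ p ≠ 0` has constant sign, so on a ball around `p` the
function `h` is an affine map plus the sum of the hinges `εᵢ |Lᵢ|` with `Lᵢ p = 0`. Each of those
is even under the point reflection `x ↦ 2p - x`, so the derivatives of their sum at `q` and at
`2p - q` are opposite, and the gradients of `h` at these two points add up to twice the gradient
of the affine part.
-/

open Filter Metric Topology

theorem AffineMap.map_two_smul_sub {k V W : Type*} [Ring k] [AddCommGroup V] [Module k V]
    [AddCommGroup W] [Module k W] (f : V →ᵃ[k] W) (p x : V) :
    f ((2 : k) • p - x) = (2 : k) • f p - f x := by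
  have h := f.map_vadd p (p - x)
  rw [vadd_eq_add, ← vsub_eq_sub, f.linearMap_vsub, vsub_eq_sub, vadd_eq_add, vsub_eq_sub] at h
  rw [two_smul, two_smul, show p + p - x = p - x + p by abel, h]
  abel

theorem AffineMap.abs_map_two_smul_sub_of_map_eq_zero {V : Type*} [AddCommGroup V] [Module ℝ V]
    (f : V →ᵃ[ℝ] ℝ) {p : V} (hp : f p = 0) (x : V) : |f ((2 : ℝ) • p - x)| = |f x| := by
  rw [f.map_two_smul_sub, hp, smul_zero, zero_sub, abs_neg]

section Reflection

variable {𝕜 E F : Type*} [NontriviallyNormedField 𝕜] [NormedAddCommGroup E] [NormedSpace 𝕜 E]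
  [NormedAddCommGroup F] [NormedSpace 𝕜 F]

theorem AffineMap.hasFDerivAt_of_finiteDimensional [CompleteSpace 𝕜] [FiniteDimensional 𝕜 E]
    (f : E →ᵃ[𝕜] F) (x : E) : HasFDerivAt f (LinearMap.toContinuousLinearMap f.linear) x :=
  (ContinuousAffineMap.mk f f.continuous_of_finiteDimensional).hasFDerivAt

theorem dist_two_smul_sub_left (p q : E) : dist ((2 : 𝕜) • p - q) p = dist q p := by
  rw [dist_eq_norm, dist_eq_norm, two_smul, add_sub_right_comm, add_sub_cancel_right, ← norm_neg,
    neg_sub]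

theorem fderiv_comp_const_sub (f : E → F) (a x : E) :
    fderiv 𝕜 (fun y ↦ f (a - y)) x = -fderiv 𝕜 f (a - x) := by
  have h := (ContinuousLinearEquiv.neg 𝕜 (M := E)).comp_right_fderiv
    (f := fun y ↦ f (a + y)) (x := x)
  simp only [Function.comp_def, ContinuousLinearEquiv.coe_neg, Pi.neg_apply, id_eq,
    fderiv_comp_add_left] at h
  ext v
  simp [sub_eq_add_neg, h]

theorem fderiv_eq_add_fderiv_of_eventuallyEq {f g n : E → F} {g' : E →L[𝕜] F} {x : E}
    (hg : HasFDerivAt g g' x) (hf : f =ᶠ[𝓝 x] g + n) (hfx : DifferentiableAt 𝕜 f x) :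
    fderiv 𝕜 f x = g' + fderiv 𝕜 n x := by
  have hn : n =ᶠ[𝓝 x] f - g := hf.mono fun y hy ↦ by simp [hy]
  have hnx : DifferentiableAt 𝕜 n x := (hfx.sub hg.differentiableAt).congr_of_eventuallyEq hn
  rw [hf.fderiv_eq, (hg.add hnx.hasFDerivAt).fderiv]

theorem fderiv_add_fderiv_two_smul_sub {f g n : E → F} {g' : E →L[𝕜] F} {p : E}
    (hg : ∀ x, HasFDerivAt g g' x) (hn : ∀ x, n ((2 : 𝕜) • p - x) = n x)
    (hf : f =ᶠ[𝓝 p] g + n) :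
    ∃ r > 0, ∀ q ∈ ball p r, DifferentiableAt 𝕜 f q → DifferentiableAt 𝕜 f ((2 : 𝕜) • p - q) →
      fderiv 𝕜 f q + fderiv 𝕜 f ((2 : 𝕜) • p - q) = (2 : 𝕜) • g' := by
  obtain ⟨r, hr, hfr⟩ := eventually_nhds_iff_ball.1 hf
  refine ⟨r, hr, fun q hq hfq hfq' ↦ ?_⟩
  have hq' : (2 : 𝕜) • p - q ∈ ball p r := by rwa [mem_ball, dist_two_smul_sub_left]
  have hnq : fderiv 𝕜 n q = -fderiv 𝕜 n ((2 : 𝕜) • p - q) := by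
    rw [← fderiv_comp_const_sub, funext hn]
  rw [fderiv_eq_add_fderiv_of_eventuallyEq (hg q) (eventually_of_mem (isOpen_ball.mem_nhds hq) hfr)
      hfq,
    fderiv_eq_add_fderiv_of_eventuallyEq (hg _) (eventually_of_mem (isOpen_ball.mem_nhds hq') hfr)
      hfq',
    hnq, two_smul 𝕜 g']
  abel

end Reflection

theorem eventually_abs_eq_sign_mul {X : Type*} [TopologicalSpace X] {g : X → ℝ} {p : X}
    (hg : ContinuousAt g p) (hp : g p ≠ 0) : ∀ᶠ x in 𝓝 p, |g x| = SignType.sign (g p) * g x := by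
  have hsign : ∀ᶠ x in 𝓝 p, SignType.sign (g x) = SignType.sign (g p) :=
    ((continuousAt_sign_of_ne_zero hp).comp hg).eventually_mem
      ((isOpen_discrete {_}).mem_nhds rfl)
  filter_upwards [hsign] with x hx
  rw [← hx, sign_mul_self]

theorem eventually_sum_mul_abs_eq {X ι : Type*} [TopologicalSpace X] [Fintype ι] {L : ι → X → ℝ}
    {p : X} (hL : ∀ i, ContinuousAt (L i) p) (ε : ι → ℝ) :
    ∀ᶠ x in 𝓝 p, ∑ i, ε i * |L i x| =
      ∑ i, ε i * SignType.sign (L i p) * L i x + ∑ i, if L i p = 0 then ε i * |L i x| else 0 := by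
  have hterm : ∀ i, ∀ᶠ x in 𝓝 p, ε i * |L i x| =
      ε i * SignType.sign (L i p) * L i x + if L i p = 0 then ε i * |L i x| else 0 := by
    intro i
    by_cases hi : L i p = 0
    · simp [hi]
    · filter_upwards [eventually_abs_eq_sign_mul (hL i) hi] with x hx
      rw [if_neg hi, hx]
      ring
  filter_upwards [eventually_all.2 hterm] with x hx
  rw [← Finset.sum_add_distrib]
  exact Finset.sum_congr rfl fun i _ ↦ hx i

theorem stmt18_general (d t : ℕ) (L₀ : (EuclideanSpace ℝ (Fin d)) →ᵃ[ℝ] ℝ)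
    (L : Fin t → ((EuclideanSpace ℝ (Fin d)) →ᵃ[ℝ] ℝ)) (ε : Fin t → ℝ)
    (h : EuclideanSpace ℝ (Fin d) → ℝ)
    (hh : ∀ x, h x = L₀ x + ∑ i, ε i * |L i x|)
    (p : EuclideanSpace ℝ (Fin d)) :
    ∃ r > 0, ∃ γ : EuclideanSpace ℝ (Fin d),
      ∀ q ∈ Metric.ball p r, DifferentiableAt ℝ h q →
        DifferentiableAt ℝ h ((2 : ℝ) • p - q) →
        gradient h q + gradient h ((2 : ℝ) • p - q) = γ := by
  set c : Fin t → ℝ := fun i ↦ ε i * SignType.sign (L i p)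
  obtain ⟨A', hA⟩ : ∃ A', ∀ x, HasFDerivAt (fun x ↦ L₀ x + ∑ i, c i * L i x) A' x :=
    ⟨_, fun x ↦ (L₀.hasFDerivAt_of_finiteDimensional x).add <|
      .fun_sum fun i _ ↦ ((L i).hasFDerivAt_of_finiteDimensional x).const_mul (c i)⟩
  have hN : ∀ x, (∑ i, if L i p = 0 then ε i * |L i ((2 : ℝ) • p - x)| else 0) =
      ∑ i, if L i p = 0 then ε i * |L i x| else 0 := fun x ↦
    Finset.sum_congr rfl fun i _ ↦ by
      split_ifs with hi
      · rw [(L i).abs_map_two_smul_sub_of_map_eq_zero hi]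
      · rfl
  have hdecomp := eventually_sum_mul_abs_eq (p := p)
    (fun i ↦ (L i).continuous_of_finiteDimensional.continuousAt) ε
  obtain ⟨r, hr, hfd⟩ := fderiv_add_fderiv_two_smul_sub (f := h)
    (n := fun x ↦ ∑ i, if L i p = 0 then ε i * |L i x| else 0) hA hN
    (hdecomp.mono fun x hx ↦ by rw [hh, hx, Pi.add_apply, add_assoc])
  refine ⟨r, hr, (InnerProductSpace.toDual ℝ _).symm ((2 : ℝ) • A'), fun q hq hq₁ hq₂ ↦ ?_⟩
  rw [gradient, gradient, ← map_add, hfd q hq hq₁ hq₂]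

theorem stmt18 (d t : ℕ) (L₀ : (EuclideanSpace ℝ (Fin d)) →ᵃ[ℝ] ℝ)
    (L : Fin t → ((EuclideanSpace ℝ (Fin d)) →ᵃ[ℝ] ℝ)) (ε : Fin t → ℝ)
    (hε : ∀ i, ε i = 1 ∨ ε i = -1)
    (h : EuclideanSpace ℝ (Fin d) → ℝ)
    (hh : ∀ x, h x = L₀ x + ∑ i, ε i * |L i x|)
    (p : EuclideanSpace ℝ (Fin d)) :
    ∃ r > 0, ∃ γ : EuclideanSpace ℝ (Fin d),
      ∀ q ∈ Metric.ball p r, DifferentiableAt ℝ h q →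
        DifferentiableAt ℝ h ((2 : ℝ) • p - q) →
        gradient h q + gradient h ((2 : ℝ) • p - q) = γ :=
  stmt18_general d t L₀ L ε h hh p
end
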